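/- For every y ∈ F, the function x ↦ Φ_sing(x,y) lies in L(F). If y ∉ t^R O_F, or if y = t^R y₀ ∈ t^R O_F and the set S_y = {x ∈ O_F : q(x) ∈ y₀ + t^{−R} O_F and q̄′(x̄) = 0} is empty, then ∫^F Φ_sing(x,y) dx = 0. Otherwise, if y = t^R y₀ ∈ t^R O_F and S_y = ⨆_{j=1}^N (a_j + t^{c_j} O_F) is a disjoint union with a_j ∈ O_F, c_j ≥ 1, and ψ_j ∈ K[X] is the residue field approximation of q with respect to a_j + t^{c_j} O_F and y₀ + t^{−R} O_F (representatives a_j and y₀), then ∫^F Φ_sing(x,y) dx = Σ′_j ∫_K f(ā_j, −ψ_j(u)) du · X^{c_j}, where Σ′ runs over those j ∈ {1,…,N} for which ψ_j is not a constant polynomial. -/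

import Mathlib

noncomputable section

open MeasureTheory Polynomial
open scoped Classical

/-- The field `ℂ(X)` of complex rational functions. -/
abbrev CX : Type := RatFunc ℂ

/-- A complete discrete valuation field with residue field `K`:
`Fc` is the field, `O` its ring of integers, `t` a fixed prime element,
`res` the residue map and `ν` the discrete valuation.  The axioms say that `O` is a
valuation subring of `Fc`, `t` is irreducible in `O`, `res` is surjective with kernel
`tO`, every nonzero element is a unit times `t ^ ν`, and `O` is `t`-adically complete. -/
structure CDVF (K : Type) [Field K] : Type 1 where
  Fc : Type
  fieldF : Field Fc
  O : Subring Fc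
  t : Fc
  ht : t ∈ O
  res : O →+* K
  ν : Fc → ℤ
  hval : ∀ x : Fc, x ∈ O ∨ x⁻¹ ∈ O
  hirr : Irreducible (⟨t, ht⟩ : O)
  hres_surj : Function.Surjective res
  hres_ker : ∀ x : O, res x = 0 ↔ (⟨t, ht⟩ : O) ∣ x
  hν : ∀ x : Fc, x ≠ 0 → ∃ u : O, IsUnit u ∧ x = (u : Fc) * t ^ ν x
  hcomplete : ∀ s : ℕ → O, (∀ n : ℕ, (⟨t, ht⟩ : O) ^ n ∣ (s (n + 1) - s n)) →
    ∃ L : O, ∀ n : ℕ, (⟨t, ht⟩ : O) ^ n ∣ (L - s n)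

attribute [instance] CDVF.fieldF

namespace CDVF

variable {K : Type} [Field K] (E : CDVF K)

/-- The residue map, extended by zero outside the ring of integers. -/
def resF (x : E.Fc) : K := if h : x ∈ E.O then E.res ⟨x, h⟩ else 0

/-- The translated fractional ideal `a + t^c O`. -/
def tfi (a : E.Fc) (c : ℤ) : Set E.Fc := {y : E.Fc | ∃ z ∈ E.O, y = a + E.t ^ c * z}

/-- The lift `f⁰` of a function on the residue field. -/
def lift0 (f : K → ℂ) : E.Fc → CX := fun x =>
  if x ∈ E.O then algebraMap ℂ CX (f (E.resF x)) else 0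

/-- The lift `f^{a,n}` of `f` at `a, n`, determined by `f^{a,n}(a + t^n x) = f⁰(x)`. -/
def liftAt (f : K → ℂ) (a : E.Fc) (n : ℤ) : E.Fc → CX := fun z =>
  E.lift0 f (E.t ^ (-n) * (z - a))

/-- The two-dimensional lift `f⁰` of `f : K × K → ℂ`. -/
def lift0₂ (f : K × K → ℂ) : E.Fc → E.Fc → CX := fun x y =>
  if x ∈ E.O ∧ y ∈ E.O then algebraMap ℂ CX (f (E.resF x, E.resF y)) else 0

/-- The lift of `f : K × K → ℂ` at `(a₁,a₂),(n₁,n₂)`. -/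
def liftAt₂ (f : K × K → ℂ) (a₁ a₂ : E.Fc) (n₁ n₂ : ℤ) : E.Fc → E.Fc → CX := fun z w =>
  E.lift0₂ f (E.t ^ (-n₁) * (z - a₁)) (E.t ^ (-n₂) * (w - a₂))

/-- The space `L(F)` of integrable functions on `F`: the `ℂ(X)`-span of the lifts
`f^{a,n}` of Haar integrable functions `f` on the residue field. -/
def LF [MeasurableSpace K] (μ : Measure K) : Submodule CX (E.Fc → CX) :=
  Submodule.span CX
    {g : E.Fc → CX | ∃ f : K → ℂ, Integrable f μ ∧ ∃ (a : E.Fc) (n : ℤ), g = E.liftAt f a n}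

/-- `Φ(x,y) = f⁰(x, y − t^R q(x))`. -/
def Phi (f : K × K → ℂ) (R : ℤ) (q : Polynomial E.O) : E.Fc → E.Fc → CX := fun x y =>
  E.lift0₂ f x (y - E.t ^ R * Polynomial.eval x (q.map E.O.subtype))

/-- The non-singular part `Φ_ns` of `Φ`: the restriction of `Φ` to `W_ns × F`,
extended by zero, where `W_ns = {x ∈ O : q̄′(x̄) ≠ 0}`. -/
def PhiNS (f : K × K → ℂ) (R : ℤ) (q : Polynomial E.O) : E.Fc → E.Fc → CX := fun x y =>
  if x ∈ E.O ∧ Polynomial.eval (E.resF x) (Polynomial.derivative (q.map E.res)) ≠ 0 then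
    E.Phi f R q x y else 0

/-- The singular part `Φ_sing` of `Φ`: the restriction of `Φ` to `W_sing × F`,
extended by zero, where `W_sing = {x ∈ O : q̄′(x̄) = 0}`. -/
def PhiSing (f : K × K → ℂ) (R : ℤ) (q : Polynomial E.O) : E.Fc → E.Fc → CX := fun x y =>
  if x ∈ E.O ∧ Polynomial.eval (E.resF x) (Polynomial.derivative (q.map E.res)) = 0 then
    E.Phi f R q x y else 0

end CDVF

section Normed

variable {K : Type} [NontriviallyNormedField K]

/-- The absolute value `|α| = |res(α t^{−ν(α)})|_K ⬝ X^{ν(α)} ∈ ℂ(X)` of `α ∈ F^×`. -/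
def CDVF.absF (E : CDVF K) (α : E.Fc) : CX :=
  algebraMap ℂ CX ((‖E.resF (α * E.t ^ (-E.ν α))‖ : ℝ) : ℂ) * RatFunc.X ^ E.ν α

/-- Schwartz–Bruhat functions on `K × K` (for nonarchimedean `K`: the locally constant
functions of compact support). -/
def IsSB (f : K × K → ℂ) : Prop := IsLocallyConstant f ∧ HasCompactSupport f

variable [MeasurableSpace K] (μ : Measure K)

/-- A Haar integrable `f : K × K → ℂ` is Fubini: both repeated integrals exist and agree. -/
def KFubini (f : K × K → ℂ) : Prop :=
  Integrable f (μ.prod μ) ∧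
  (∀ u : K, Integrable (fun v => f (u, v)) μ) ∧
  (∀ v : K, Integrable (fun u => f (u, v)) μ) ∧
  Integrable (fun u => ∫ v, f (u, v) ∂μ) μ ∧
  Integrable (fun v => ∫ u, f (u, v) ∂μ) μ ∧
  (∫ u, ∫ v, f (u, v) ∂μ ∂μ) = ∫ v, ∫ u, f (u, v) ∂μ ∂μ

/-- `I` is the two-dimensional integral `∫^F` on `L(F)`: a `ℂ(X)`-linear functional which
lifts the Haar integral, is translation invariant, and is compatible with multiplicative
structure. -/
def CDVF.IsIntegralF (E : CDVF K) (I : (E.Fc → CX) →ₗ[CX] CX) : Prop :=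
  (∀ f : K → ℂ, Integrable f μ → I (E.lift0 f) = algebraMap ℂ CX (∫ u, f u ∂μ)) ∧
  (∀ g ∈ E.LF μ, ∀ a : E.Fc, I (fun x => g (x + a)) = I g) ∧
  (∀ g ∈ E.LF μ, ∀ α : E.Fc, α ≠ 0 → I (fun x => g (α * x)) = (E.absF α)⁻¹ * I g)

/-- A `ℂ(X)`-valued function on `F × F` is Fubini (with respect to the integral `I`):
all sections and repeated integrands are integrable and the two repeated integrals agree. -/
def CDVF.FFubini (E : CDVF K) (I : (E.Fc → CX) →ₗ[CX] CX) (g : E.Fc → E.Fc → CX) : Prop :=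
  (∀ x : E.Fc, (fun y => g x y) ∈ E.LF μ) ∧
  ((fun x => I (fun y => g x y)) ∈ E.LF μ) ∧
  (∀ y : E.Fc, (fun x => g x y) ∈ E.LF μ) ∧
  ((fun y => I (fun x => g x y)) ∈ E.LF μ) ∧
  I (fun x => I (fun y => g x y)) = I (fun y => I (fun x => g x y))

/-- The conclusion of the change-of-variables conjecture for the data
`a₁, a₂, n₁, n₂, h`: for every Schwartz–Bruhat `f` on `K × K`, with `g` the lift of `f` at
`(a₁,a₂),(n₁,n₂)`, the function `(x,y) ↦ g(x, y − h(x))` is Fubini on `F × F` with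
repeated integral `∫∫ f du dv ⬝ X^{n₁+n₂}`. -/
def CDVF.ConjHolds (E : CDVF K) (I : (E.Fc → CX) →ₗ[CX] CX)
    (a₁ a₂ : E.Fc) (n₁ n₂ : ℤ) (h : Polynomial E.Fc) : Prop :=
  ∀ f : K × K → ℂ, IsSB f →
    E.FFubini μ I (fun x y => E.liftAt₂ f a₁ a₂ n₁ n₂ x (y - Polynomial.eval x h)) ∧
    I (fun y => I (fun x => E.liftAt₂ f a₁ a₂ n₁ n₂ x (y - Polynomial.eval x h))) =
      algebraMap ℂ CX (∫ v, ∫ u, f (u, v) ∂μ ∂μ) * RatFunc.X ^ (n₁ + n₂)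

end Normed

/-!
For `y ∉ t^R O` the section `Φ_sing(·, y)` vanishes. For `y = t^R y₀` put
`D(x) = (q(x) - y₀) t^R`; then `Φ(x, y) = f(x̄, -D(x)‾)` if `x, D(x) ∈ O` and `0` otherwise.

Integrability. On `a + t^c O` with `c ≥ 1` write `q(a + t^c X) - y₀ = t^e Q` with `Q̄ ≠ 0`.
If `e ≥ -R`, then `D(a + t^c z) = t^(e+R) Q(z)` is integral with residue `ψ(z̄)`, where `ψ` is
`Q̄` or `0`, so `Φ(·, y)` on `a + t^c O` is a lift `f^{a,c}` of `u ↦ f(ā, -ψ(u))`. If `e < -R`,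
then `D(a + t^c z) ∈ O` forces `Q̄(z̄) = 0`, so `a + t^c O` splits into the finitely many classes
`a + t^c ũ + t^(c+1) O` over the roots `u` of `Q̄`, on each of which `e` strictly grows. This
refinement terminates after at most `-R` steps; it starts from the residue classes of `O` on
which `q̄' = 0` and `q̄ = ȳ₀`, which cover the support of `Φ_sing(·, y)`.

Integral. On the pieces `aⱼ + t^cⱼ O` of `S_y` the integrand is `f(āⱼ, -ψⱼ(z̄))` at
`aⱼ + t^cⱼ z`, i.e. a lift at `aⱼ, cⱼ`, whose integral `∫ f(āⱼ, -ψⱼ(u)) du · X^cⱼ` follows from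
translation and scaling invariance of `∫^F`; for constant `ψⱼ` it is a lift of a point mass at
level `cⱼ - 1`, with integral `0`.
-/

namespace CDVF

variable {K : Type} [Field K] (E : CDVF K)

def tO : E.O := ⟨E.t, E.ht⟩

@[simp] lemma coe_tO : (E.tO : E.Fc) = E.t := rfl

lemma tO_ne_zero : E.tO ≠ 0 := E.hirr.ne_zero

lemma t_ne_zero : E.t ≠ 0 := fun h => E.tO_ne_zero (Subtype.ext h)

@[simp] lemma res_tO : E.res E.tO = 0 := (E.hres_ker E.tO).2 dvd_rfl

lemma res_ne_zero_of_isUnit {u : E.O} (hu : IsUnit u) : E.res u ≠ 0 := fun h =>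
  E.hirr.not_isUnit (isUnit_of_dvd_unit ((E.hres_ker u).1 h) hu)

lemma coe_inv_mem_of_isUnit {u : E.O} (hu : IsUnit u) : (u : E.Fc)⁻¹ ∈ E.O := by
  obtain ⟨w, hw⟩ := hu.exists_right_inv
  have hw' : (u : E.Fc) * w = 1 := congrArg Subtype.val hw
  rw [inv_eq_of_mul_eq_one_right hw']
  exact w.2

lemma t_zpow_mem_iff {n : ℤ} : E.t ^ n ∈ E.O ↔ 0 ≤ n := by
  refine ⟨fun hn => ?_, fun hn => ?_⟩
  · by_contra! hneg
    have hinv : E.t⁻¹ ∈ E.O := by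
      have : E.t⁻¹ = E.t ^ n * E.t ^ (-n - 1).toNat := by
        rw [← zpow_natCast, Int.toNat_of_nonneg (by omega), ← zpow_add₀ E.t_ne_zero,
          show n + (-n - 1) = -1 by ring, zpow_neg_one]
      exact this ▸ mul_mem hn (pow_mem E.ht _)
    exact E.hirr.not_isUnit (IsUnit.of_mul_eq_one (⟨_, hinv⟩ : E.O)
      (Subtype.ext (mul_inv_cancel₀ E.t_ne_zero)))
  · lift n to ℕ using hn
    exact zpow_natCast E.t n ▸ pow_mem E.ht n

lemma t_zpow_mem {n : ℤ} (hn : 0 ≤ n) : E.t ^ n ∈ E.O := E.t_zpow_mem_iff.2 hn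

lemma ν_t_zpow (k : ℤ) : E.ν (E.t ^ k) = k := by
  obtain ⟨u, hu, heq⟩ := E.hν (E.t ^ k) (zpow_ne_zero _ E.t_ne_zero)
  have hu' : (u : E.Fc) = E.t ^ (k - E.ν (E.t ^ k)) := by
    rw [zpow_sub₀ E.t_ne_zero, eq_div_iff (zpow_ne_zero _ E.t_ne_zero), ← heq]
  have h₁ := E.t_zpow_mem_iff.1 (hu' ▸ u.2)
  have h₂ := E.t_zpow_mem_iff.1 (by simpa [hu', ← zpow_neg] using E.coe_inv_mem_of_isUnit hu)
  omega

lemma exists_eq_tO_pow_mul {x : E.O} (hx : x ≠ 0) :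
    ∃ (n : ℕ) (u : E.O), x = E.tO ^ n * u ∧ E.res u ≠ 0 := by
  obtain ⟨u, hu, heq⟩ := E.hν x (fun h => hx (Subtype.ext h))
  generalize E.ν x = m at heq
  have hu0 : (u : E.Fc) ≠ 0 := fun h => hx (Subtype.ext (by simp [heq, h]))
  have hm : 0 ≤ m := by
    refine E.t_zpow_mem_iff.1 ?_
    have : E.t ^ m = (u : E.Fc)⁻¹ * x := by
      rw [heq, ← mul_assoc, inv_mul_cancel₀ hu0, one_mul]
    exact this ▸ mul_mem (E.coe_inv_mem_of_isUnit hu) x.2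
  refine ⟨m.toNat, u, Subtype.ext ?_, E.res_ne_zero_of_isUnit hu⟩
  simp [heq, ← zpow_natCast, Int.toNat_of_nonneg hm, mul_comm]

lemma exists_eq_C_tO_pow_mul {P : E.O[X]} (hP : P ≠ 0) :
    ∃ (e : ℕ) (Q : E.O[X]), P = C (E.tO ^ e) * Q ∧ Q.map E.res ≠ 0 := by
  obtain ⟨n, u, hlc, hu⟩ := E.exists_eq_tO_pow_mul (leadingCoeff_ne_zero.2 hP)
  induction n generalizing P with
  | zero =>
    refine ⟨0, P, by simp, fun h => hu ?_⟩
    simpa [hlc] using congrArg (coeff · P.natDegree) h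
  | succ n ih =>
    by_cases hm : P.map E.res = 0
    · obtain ⟨P', rfl⟩ : C E.tO ∣ P := (C_dvd_iff_dvd_coeff _ _).2 fun i =>
        (E.hres_ker _).1 (by rw [← coeff_map, hm, coeff_zero])
      have hlc' : P'.leadingCoeff = E.tO ^ n * u := mul_left_cancel₀ E.tO_ne_zero <| by
        calc E.tO * P'.leadingCoeff = (C E.tO * P').leadingCoeff := by
              rw [leadingCoeff_mul, leadingCoeff_C]
          _ = E.tO * (E.tO ^ n * u) := by rw [hlc, pow_succ', mul_assoc]
      obtain ⟨e, Q, rfl, hQ⟩ := ih (right_ne_zero_of_mul hP) hlc'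
      exact ⟨e + 1, Q, by rw [pow_succ', C_mul, mul_assoc], hQ⟩
    · exact ⟨0, P, by simp, hm⟩

@[simp] lemma resF_coe (z : E.O) : E.resF z = E.res z := dif_pos z.2

lemma resF_one : E.resF 1 = 1 := by simpa using E.resF_coe 1

lemma resF_neg (w : E.Fc) : E.resF (-w) = -E.resF w := by
  by_cases hw : w ∈ E.O
  · lift w to E.O using hw
    simpa using E.resF_coe (-w)
  · simp [resF, hw]

lemma resF_t_mul {w : E.Fc} (hw : w ∈ E.O) : E.resF (E.t * w) = 0 := by
  simpa using E.resF_coe (E.tO * ⟨w, hw⟩)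

lemma t_zpow_mul_eq_t_mul (c : ℤ) (z : E.Fc) :
    E.t ^ c * z = E.t * (E.t ^ (c - 1) * z) := by
  rw [← mul_assoc, ← zpow_one_add₀ E.t_ne_zero, add_sub_cancel]

lemma resF_of_mem_tfi {a : E.O} {c : ℤ} (hc : 1 ≤ c) {x : E.Fc} (hx : x ∈ E.tfi a c) :
    E.resF x = E.res a := by
  obtain ⟨z, hz, rfl⟩ := hx
  rw [E.t_zpow_mul_eq_t_mul]
  simpa using E.resF_coe (a + E.tO * ⟨_, mul_mem (E.t_zpow_mem (by omega)) hz⟩)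

lemma coe_eval (P : E.O[X]) (z : E.O) :
    ((P.eval z : E.O) : E.Fc) = (P.map E.O.subtype).eval (z : E.Fc) := by
  rw [eval_map]
  exact (eval₂_at_apply E.O.subtype z).symm

lemma mem_tfi_iff {a x : E.Fc} {c : ℤ} : x ∈ E.tfi a c ↔ E.t ^ (-c) * (x - a) ∈ E.O := by
  have ht : E.t ^ c ≠ 0 := zpow_ne_zero c E.t_ne_zero
  constructor
  · rintro ⟨z, hz, rfl⟩
    simpa [zpow_neg, ht] using hz
  · exact fun h => ⟨_, h, by simp [zpow_neg, ht]⟩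

lemma add_mem_tfi (a : E.Fc) (c : ℤ) {z : E.Fc} (hz : z ∈ E.O) :
    a + E.t ^ c * z ∈ E.tfi a c :=
  ⟨z, hz, rfl⟩

lemma mem_O_of_mem_tfi {a : E.Fc} (ha : a ∈ E.O) {c : ℤ} (hc : 0 ≤ c) {x : E.Fc}
    (hx : x ∈ E.tfi a c) : x ∈ E.O := by
  obtain ⟨z, hz, rfl⟩ := hx
  exact add_mem ha (mul_mem (E.t_zpow_mem hc) hz)

lemma tfi_succ_subset (a : E.Fc) (c : ℤ) (b : E.O) :
    E.tfi (a + E.t ^ c * b) (c + 1) ⊆ E.tfi a c := by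
  rintro x ⟨z, hz, rfl⟩
  refine ⟨b + E.t * z, add_mem b.2 (mul_mem E.ht hz), ?_⟩
  rw [zpow_add_one₀ E.t_ne_zero]
  ring

lemma add_mem_tfi_succ_iff (a : E.Fc) (c : ℤ) (b z : E.O) :
    a + E.t ^ c * z ∈ E.tfi (a + E.t ^ c * b) (c + 1) ↔ E.res z = E.res b := by
  have ht : E.t ^ c ≠ 0 := zpow_ne_zero c E.t_ne_zero
  rw [← sub_eq_zero, ← map_sub, E.hres_ker, mem_tfi_iff]
  have : E.t ^ (-(c + 1)) * (a + E.t ^ c * z - (a + E.t ^ c * b)) = E.t⁻¹ * (z - b : E.O) := by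
    rw [neg_add, zpow_add₀ E.t_ne_zero, zpow_neg, zpow_neg_one]
    field_simp
    push_cast
    ring
  rw [this]
  constructor
  · intro h
    exact ⟨⟨_, h⟩, Subtype.ext (by simp [E.t_ne_zero])⟩
  · rintro ⟨w, hw⟩
    simp [hw, E.t_ne_zero]

def rep (u : K) : E.O := Function.surjInv E.hres_surj u

@[simp] lemma res_rep (u : K) : E.res (E.rep u) = u := Function.surjInv_eq E.hres_surj u

lemma indicator_tfi_eq_sum {M : Type*} [AddCommMonoid M] (H : E.Fc → M) (a : E.Fc) (c : ℤ)
    (s : Finset K) (hH : ∀ z : E.O, H (a + E.t ^ c * z) ≠ 0 → E.res z ∈ s) :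
    (E.tfi a c).indicator H = ∑ u ∈ s, (E.tfi (a + E.t ^ c * E.rep u) (c + 1)).indicator H := by
  have hdisj : (s : Set K).PairwiseDisjoint fun u => E.tfi (a + E.t ^ c * E.rep u) (c + 1) := by
    intro u _ v _ huv
    refine Set.disjoint_left.2 fun x hxu hxv => huv ?_
    obtain ⟨z, hz, rfl⟩ := E.tfi_succ_subset a c _ hxu
    rw [← E.res_rep u, ← E.res_rep v, ← (E.add_mem_tfi_succ_iff a c _ ⟨z, hz⟩).1 hxu,
      (E.add_mem_tfi_succ_iff a c _ ⟨z, hz⟩).1 hxv]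
  ext x
  rw [Finset.sum_apply, ← Finset.indicator_biUnion_apply s _ hdisj]
  by_cases hx : x ∈ E.tfi a c
  · obtain ⟨z, hz, rfl⟩ := hx
    by_cases hH0 : H (a + E.t ^ c * z) = 0
    · simp [Set.indicator_apply, hH0]
    have hmem : a + E.t ^ c * z ∈ ⋃ u ∈ s, E.tfi (a + E.t ^ c * E.rep u) (c + 1) :=
      Set.mem_biUnion (hH ⟨z, hz⟩ hH0)
        ((E.add_mem_tfi_succ_iff a c _ ⟨z, hz⟩).2 (E.res_rep _).symm)
    rw [Set.indicator_of_mem (E.add_mem_tfi a c hz), Set.indicator_of_mem hmem]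
  · have hx' : x ∉ ⋃ u ∈ s, E.tfi (a + E.t ^ c * E.rep u) (c + 1) := by
      simp only [Set.mem_iUnion, not_exists]
      exact fun u _ h => hx (E.tfi_succ_subset a c _ h)
    rw [Set.indicator_of_notMem hx, Set.indicator_of_notMem hx']

lemma eq_liftAt {G : E.Fc → CX} {g : K → ℂ} {a : E.Fc} {c : ℤ}
    (hsupp : ∀ x ∉ E.tfi a c, G x = 0)
    (hval : ∀ z : E.O, G (a + E.t ^ c * z) = algebraMap ℂ CX (g (E.res z))) :
    G = E.liftAt g a c := by
  funext x
  by_cases hx : E.t ^ (-c) * (x - a) ∈ E.O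
  · have hx' : x = a + E.t ^ c * (⟨_, hx⟩ : E.O) := by
      simp [zpow_neg, zpow_ne_zero c E.t_ne_zero]
    rw [liftAt, lift0, if_pos hx, hx', hval, ← hx', resF, dif_pos hx]
  · rw [liftAt, lift0, if_neg hx, hsupp x (E.mem_tfi_iff.not.2 hx)]

/-- A nonzero constant on `K` is not Haar integrable, but a constant on `a + t^c O` is the lift
at level `c - 1` of a point mass, whose integral vanishes. -/
lemma eq_liftAt_sub_one_of_const {G : E.Fc → CX} {κ : ℂ} {a : E.Fc} {c : ℤ}
    (hsupp : ∀ x ∉ E.tfi a c, G x = 0)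
    (hval : ∀ z : E.O, G (a + E.t ^ c * z) = algebraMap ℂ CX κ) :
    G = E.liftAt (fun u => if u = 0 then κ else 0) a (c - 1) := by
  have hsub : E.tfi a c ⊆ E.tfi a (c - 1) := by
    simpa using E.tfi_succ_subset a (c - 1) 0
  have hclass (z : E.O) : a + E.t ^ (c - 1) * z ∈ E.tfi a c ↔ E.res z = 0 := by
    simpa using E.add_mem_tfi_succ_iff a (c - 1) 0 z
  refine E.eq_liftAt (fun x hx => hsupp x fun h => hx (hsub h)) fun z => ?_
  split_ifs with hz
  · obtain ⟨w, rfl⟩ := (E.hres_ker z).1 hz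
    have : E.t ^ (c - 1) * (E.t * w) = E.t ^ c * w := by
      rw [← mul_assoc, ← zpow_add_one₀ E.t_ne_zero, sub_add_cancel]
    exact this ▸ hval w
  · rw [hsupp _ ((hclass z).not.2 hz), map_zero]

lemma liftAt_mem_LF [MeasurableSpace K] (μ : Measure K) {f : K → ℂ} (hf : Integrable f μ)
    (a : E.Fc) (n : ℤ) : E.liftAt f a n ∈ E.LF μ :=
  Submodule.subset_span ⟨f, hf, a, n, rfl⟩

def defect (q : E.O[X]) (R : ℤ) (y₀ x : E.Fc) : E.Fc :=
  ((q.map E.O.subtype).eval x - y₀) * E.t ^ R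

/-- The set `S_y` of the statement, for `y = t^R y₀`. -/
def singFiber (q : E.O[X]) (R : ℤ) (y₀ : E.Fc) : Set E.Fc :=
  {x : E.Fc | x ∈ E.O ∧
    (∃ z ∈ E.O, Polynomial.eval x (q.map E.O.subtype) = y₀ + E.t ^ (-R) * z) ∧
    Polynomial.eval (E.resF x) (Polynomial.derivative (q.map E.res)) = 0}

lemma defect_mem_iff {q : E.O[X]} {R : ℤ} {y₀ x : E.Fc} :
    E.defect q R y₀ x ∈ E.O ↔
      ∃ z ∈ E.O, (q.map E.O.subtype).eval x = y₀ + E.t ^ (-R) * z := by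
  have ht : E.t ^ R ≠ 0 := zpow_ne_zero R E.t_ne_zero
  constructor
  · exact fun h => ⟨_, h, by rw [defect, zpow_neg]; field_simp; ring⟩
  · rintro ⟨z, hz, hx⟩
    convert hz using 1
    rw [defect, hx, zpow_neg]
    field_simp
    ring

lemma Phi_t_zpow_mul (f : K × K → ℂ) (R : ℤ) (q : E.O[X]) (y₀ x : E.Fc) :
    E.Phi f R q x (E.t ^ R * y₀) = if x ∈ E.O ∧ E.defect q R y₀ x ∈ E.O
      then algebraMap ℂ CX (f (E.resF x, -E.resF (E.defect q R y₀ x))) else 0 := by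
  have : E.t ^ R * y₀ - E.t ^ R * (q.map E.O.subtype).eval x = -E.defect q R y₀ x := by
    simp only [defect]
    ring
  simp only [Phi, lift0₂, this, neg_mem_iff, resF_neg]

lemma PhiSing_t_zpow_mul (f : K × K → ℂ) (R : ℤ) (q : E.O[X]) (y₀ x : E.Fc) :
    E.PhiSing f R q x (E.t ^ R * y₀) = if x ∈ E.singFiber q R y₀
      then algebraMap ℂ CX (f (E.resF x, -E.resF (E.defect q R y₀ x))) else 0 := by
  simp only [PhiSing, Phi_t_zpow_mul, singFiber, Set.mem_ofPred_eq, ← defect_mem_iff]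
  by_cases hx : x ∈ E.O <;> by_cases hd : E.defect q R y₀ x ∈ E.O <;> simp [hx, hd]

lemma mem_singFiber_of_PhiSing_ne_zero {f : K × K → ℂ} {R : ℤ} {q : E.O[X]} {y₀ x : E.Fc}
    (h : E.PhiSing f R q x (E.t ^ R * y₀) ≠ 0) : x ∈ E.singFiber q R y₀ := by
  rw [PhiSing_t_zpow_mul] at h
  exact (ite_ne_right_iff.1 h).1

lemma PhiSing_eq_zero_of_notMem_t_zpow_mul (f : K × K → ℂ) {R : ℤ} (hR : R < 0) (q : E.O[X])
    {x y : E.Fc} (hy : ¬ ∃ z ∈ E.O, y = E.t ^ R * z) : E.PhiSing f R q x y = 0 := by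
  by_cases hx : x ∈ E.O
  · have hqx : (q.map E.O.subtype).eval x ∈ E.O :=
      E.coe_eval q ⟨x, hx⟩ ▸ (q.eval ⟨x, hx⟩).2
    have hmem : y - E.t ^ R * (q.map E.O.subtype).eval x ∉ E.O := fun h => hy
      ⟨_, add_mem hqx (mul_mem (E.t_zpow_mem (n := -R) (by omega)) h), by
        rw [mul_add, ← mul_assoc, ← zpow_add₀ E.t_ne_zero, add_neg_cancel, zpow_zero]
        ring⟩
    simp [PhiSing, Phi, lift0₂, hmem]
  · simp [PhiSing, hx]

def shiftPoly (q : E.O[X]) (y₀ a : E.O) (c : ℕ) : E.O[X] :=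
  q.comp (C (E.tO ^ c) * X + C a) - C y₀

lemma defect_add_t_pow_mul {q : E.O[X]} (R : ℤ) {y₀ a : E.O} {c e : ℕ} {Q : E.O[X]}
    (hP : E.shiftPoly q y₀ a c = C (E.tO ^ e) * Q) (z : E.O) :
    E.defect q R y₀ (a + E.t ^ (c : ℤ) * z) =
      E.t ^ ((e : ℤ) + R) * ((Q.eval z : E.O) : E.Fc) := by
  have h := congrArg (fun P => ((P.eval z : E.O) : E.Fc)) hP
  push_cast [shiftPoly, eval_sub, eval_comp, eval_mul, eval_add, eval_C, eval_X, E.coe_eval,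
    coe_tO] at h
  rw [defect, zpow_natCast, add_comm (a : E.Fc), h, zpow_add₀ E.t_ne_zero, zpow_natCast,
    E.coe_eval]
  ring

lemma exists_comp_succ_eq_C_mul {q : E.O[X]} {y₀ a : E.O} {c e : ℕ} {Q : E.O[X]}
    (hP : E.shiftPoly q y₀ a c = C (E.tO ^ e) * Q) (hQ : Q.map E.res ≠ 0)
    {u : K} (hu : (Q.map E.res).eval u = 0) :
    ∃ (e' : ℕ) (Q' : E.O[X]), e < e' ∧
      E.shiftPoly q y₀ (a + E.tO ^ c * E.rep u) (c + 1) = C (E.tO ^ e') * Q' ∧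
      Q'.map E.res ≠ 0 := by
  set L : E.O[X] := C E.tO * X + C (E.rep u)
  have hL : (C (E.tO ^ c) * X + C a).comp L =
      C (E.tO ^ (c + 1)) * X + C (a + E.tO ^ c * E.rep u) := by
    simp only [L, add_comp, mul_comp, C_comp, X_comp, pow_succ, C_add, C_mul]
    ring
  have hQL : Q.comp L ≠ 0 := by
    rw [Ne, comp_eq_zero_iff, not_or, not_and_or]
    refine ⟨fun h => hQ (by simp [h]), Or.inr fun h => E.tO_ne_zero ?_⟩
    simpa [L] using congrArg (coeff · 1) h
  have hQL₀ : (Q.comp L).map E.res = 0 := by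
    simp [L, map_comp, hu]
  obtain ⟨e₂, Q', hQ', hQ'₀⟩ := E.exists_eq_C_tO_pow_mul hQL
  have he₂ : e₂ ≠ 0 := by
    rintro rfl
    exact hQ'₀ (by simpa [hQ'] using hQL₀)
  refine ⟨e + e₂, Q', by omega, ?_, hQ'₀⟩
  rw [shiftPoly, ← hL, ← comp_assoc, ← C_comp (a := y₀) (p := L), ← sub_comp,
    ← shiftPoly, hP, mul_comp, C_comp, hQ', ← mul_assoc, ← C_mul, ← pow_add]


lemma eval_res_eq_zero_of_defect_mem {q : E.O[X]} {R : ℤ} {y₀ a : E.O} {c e : ℕ} {Q : E.O[X]}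
    (hP : E.shiftPoly q y₀ a c = C (E.tO ^ e) * Q) (he : (e : ℤ) + R < 0)
    {z : E.O} (hD : E.defect q R y₀ (a + E.t ^ (c : ℤ) * z) ∈ E.O) :
    (Q.map E.res).eval (E.res z) = 0 := by
  have hQz : ((Q.eval z : E.O) : E.Fc) =
      E.t * (E.t ^ (-((e : ℤ) + R) - 1) * E.defect q R y₀ (a + E.t ^ (c : ℤ) * z)) := by
    rw [E.defect_add_t_pow_mul R hP, ← mul_assoc, ← mul_assoc, ← zpow_one_add₀ E.t_ne_zero,
      ← zpow_add₀ E.t_ne_zero, show 1 + (-((e : ℤ) + R) - 1) + (e + R) = 0 by ring, zpow_zero,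
      one_mul]
  rw [eval_map, eval₂_at_apply, ← resF_coe, hQz,
    E.resF_t_mul (mul_mem (E.t_zpow_mem (by omega)) hD)]
end CDVF

namespace CDVF

variable {K : Type} [NontriviallyNormedField K] (E : CDVF K)

lemma absF_t_zpow (k : ℤ) : E.absF (E.t ^ k) = RatFunc.X ^ k := by
  simp [absF, E.ν_t_zpow, mul_inv_cancel₀ (zpow_ne_zero k E.t_ne_zero), E.resF_one]

variable [MeasurableSpace K] (μ : Measure K)

lemma integral_liftAt {I : (E.Fc → CX) →ₗ[CX] CX} (hI : E.IsIntegralF μ I) {f : K → ℂ}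
    (hf : Integrable f μ) (a : E.Fc) (n : ℤ) :
    I (E.liftAt f a n) = algebraMap ℂ CX (∫ u, f u ∂μ) * RatFunc.X ^ n := by
  have htrans : E.liftAt f a n = fun x => E.liftAt f 0 n (x + -a) := by
    funext x
    simp [liftAt, sub_eq_add_neg]
  have hscale : E.liftAt f 0 n = fun x => E.lift0 f (E.t ^ (-n) * x) := by
    funext x
    simp [liftAt]
  have hlift0 : E.lift0 f = E.liftAt f 0 0 := by
    funext x
    simp [liftAt]
  rw [htrans, hI.2.1 _ (E.liftAt_mem_LF μ hf 0 n), hscale,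
    hI.2.2 _ (hlift0 ▸ E.liftAt_mem_LF μ hf 0 0) _ (zpow_ne_zero _ E.t_ne_zero),
    hI.1 f hf, E.absF_t_zpow, zpow_neg, inv_inv, mul_comm]

end CDVF

section Haar

open Filter

variable {K : Type} [NontriviallyNormedField K] [MeasurableSpace K] [BorelSpace K]
  [LocallyCompactSpace K] (μ : Measure K) [Measure.IsAddHaarMeasure μ]

lemma IsSB.integrable_comp_neg_eval {f : K × K → ℂ} (hf : IsSB f) (κ : K) {ψ : K[X]}
    (hψ : 0 < ψ.degree) : Integrable (fun u => f (κ, -ψ.eval u)) μ := by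
  have : ProperSpace K :=
    ProperSpace.of_nontriviallyNormedField_of_weaklyLocallyCompactSpace K
  have hcont : Continuous fun u : K => f (κ, -ψ.eval u) :=
    (hf.1.comp_continuous (continuous_const.prodMk ψ.continuous.neg)).continuous
  refine hcont.integrable_of_hasCompactSupport ?_
  obtain ⟨M, hM⟩ := hf.2.isBounded.exists_norm_le
  obtain ⟨S, hScomp, hS⟩ := mem_cocompact.mp <|
    (ψ.tendsto_norm_atTop hψ tendsto_norm_cocompact_atTop).eventually (eventually_gt_atTop M)
  refine HasCompactSupport.intro hScomp fun u hu => image_eq_zero_of_notMem_tsupport fun hmem => ?_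
  have : M < ‖ψ.eval u‖ := hS hu
  have := (norm_snd_le (κ, -ψ.eval u)).trans (hM _ hmem)
  simp only [norm_neg] at this
  linarith

lemma ite_eq_zero_ae_eq_zero (κ : ℂ) : (fun u : K => if u = 0 then κ else 0) =ᵐ[μ] 0 :=
  ae_iff.2 <| measure_mono_null (fun _ hu => by_contra fun h => hu (if_neg h))
    (measure_singleton 0)

namespace CDVF

variable (E : CDVF K) {I : (E.Fc → CX) →ₗ[CX] CX} {f : K × K → ℂ} {R : ℤ} {q : E.O[X]}

lemma mem_LF_and_integral_of_eq_on_tfi (hI : E.IsIntegralF μ I) (hf : IsSB f) {a : E.O} {c : ℤ}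
    (ψ : K[X]) {G : E.Fc → CX}
    (hsupp : ∀ x ∉ E.tfi a c, G x = 0)
    (hval : ∀ z : E.O,
      G (a + E.t ^ c * z) = algebraMap ℂ CX (f (E.res a, -ψ.eval (E.res z)))) :
    G ∈ E.LF μ ∧ I G = if ψ.degree ≤ 0 then 0
      else algebraMap ℂ CX (∫ u, f (E.res a, -ψ.eval u) ∂μ) * RatFunc.X ^ c := by
  by_cases hψ : ψ.degree ≤ 0
  · set κ := f (E.res a, -ψ.coeff 0)
    have hG : G = E.liftAt (fun u => if u = 0 then κ else 0) a (c - 1) := by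
      refine E.eq_liftAt_sub_one_of_const hsupp fun z => ?_
      rw [hval, eq_C_of_degree_le_zero hψ, eval_C]
    have hint := (integrable_zero K ℂ μ).congr (ite_eq_zero_ae_eq_zero μ κ).symm
    rw [if_pos hψ, hG, E.integral_liftAt μ hI hint,
      integral_congr_ae (ite_eq_zero_ae_eq_zero μ κ)]
    exact ⟨E.liftAt_mem_LF μ hint _ _, by simp⟩
  · have hint := hf.integrable_comp_neg_eval μ (E.res a) (not_le.1 hψ)
    have hG : G = E.liftAt (fun u => f (E.res a, -ψ.eval u)) a c := E.eq_liftAt hsupp hval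
    rw [if_neg hψ, hG, E.integral_liftAt μ hI hint]
    exact ⟨E.liftAt_mem_LF μ hint _ _, rfl⟩

lemma indicator_Phi_mem_LF_of_le (hI : E.IsIntegralF μ I) (hf : IsSB f) {y₀ a : E.O} {c e : ℕ}
    (hc : 1 ≤ c) {Q : E.O[X]}
    (hP : E.shiftPoly q y₀ a c = C (E.tO ^ e) * Q) (he : -R ≤ e) :
    (E.tfi a c).indicator (fun x => E.Phi f R q x (E.t ^ R * y₀)) ∈ E.LF μ := by
  set ψ : K[X] := if (e : ℤ) + R = 0 then Q.map E.res else 0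
  refine (E.mem_LF_and_integral_of_eq_on_tfi μ hI hf ψ
    (fun x hx => Set.indicator_of_notMem hx _) fun z => ?_).1
  have hD := E.defect_add_t_pow_mul R hP z
  have hDmem : E.defect q R y₀ (a + E.t ^ (c : ℤ) * z) ∈ E.O :=
    hD ▸ mul_mem (E.t_zpow_mem (by omega)) (Q.eval z).2
  have hmem := E.add_mem_tfi a c z.2
  rw [Set.indicator_of_mem hmem, Phi_t_zpow_mul,
    if_pos ⟨E.mem_O_of_mem_tfi a.2 (by omega) hmem, hDmem⟩,
    E.resF_of_mem_tfi (by omega) hmem, hD]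
  by_cases h0 : (e : ℤ) + R = 0
  · simp [ψ, h0, eval_map, eval₂_at_apply]
  · rw [E.t_zpow_mul_eq_t_mul, E.resF_t_mul (mul_mem (E.t_zpow_mem (by omega)) (Q.eval z).2)]
    simp [ψ, h0]

lemma indicator_Phi_mem_LF (hI : E.IsIntegralF μ I) (hf : IsSB f) (n : ℕ) {y₀ a : E.O}
    {c e : ℕ} (hc : 1 ≤ c) {Q : E.O[X]}
    (hP : E.shiftPoly q y₀ a c = C (E.tO ^ e) * Q) (hQ : Q.map E.res ≠ 0)
    (he : -R ≤ e + n) :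
    (E.tfi a c).indicator (fun x => E.Phi f R q x (E.t ^ R * y₀)) ∈ E.LF μ := by
  induction n generalizing a c e Q with
  | zero => exact E.indicator_Phi_mem_LF_of_le μ hI hf hc hP (by simpa using he)
  | succ n ih =>
    by_cases he' : -R ≤ e
    · exact E.indicator_Phi_mem_LF_of_le μ hI hf hc hP he'
    rw [E.indicator_tfi_eq_sum _ _ _ (Q.map E.res).roots.toFinset fun z hz => ?_]
    · refine Submodule.sum_mem _ fun u hu => ?_
      have hu' : (Q.map E.res).eval u = 0 := (mem_roots'.1 (Multiset.mem_toFinset.1 hu)).2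
      obtain ⟨e', Q', hee', hP', hQ'⟩ := E.exists_comp_succ_eq_C_mul hP hQ hu'
      have hclass : E.tfi (a + E.t ^ (c : ℤ) * E.rep u) (c + 1) =
          E.tfi ↑(a + E.tO ^ c * E.rep u) ↑(c + 1) := by
        push_cast [coe_tO, zpow_natCast]
        rfl
      exact hclass ▸ ih (by omega) hP' hQ' (by omega)
    · rw [Phi_t_zpow_mul] at hz
      have hD := (ite_ne_right_iff.1 hz).1.2
      rw [Multiset.mem_toFinset, mem_roots', IsRoot]
      exact ⟨hQ, E.eval_res_eq_zero_of_defect_mem hP (by omega) hD⟩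

lemma PhiSing_t_zpow_mul_mem_LF (hI : E.IsIntegralF μ I) (hf : IsSB f) (hR : R < 0)
    (hq0 : q.coeff 0 = 0) (hqbar : q.map E.res ≠ 0) (y₀ : E.O) :
    (fun x => E.PhiSing f R q x (E.t ^ R * y₀)) ∈ E.LF μ := by
  set H := fun x => E.PhiSing f R q x (E.t ^ R * y₀)
  have hP : E.shiftPoly q y₀ 0 0 = C (E.tO ^ 0) * (q - C y₀) := by simp [shiftPoly]
  have hP₀ : (q - C y₀).map E.res ≠ 0 := by
    intro h
    have hy₀ : E.res y₀ = 0 := by simpa [hq0] using congrArg (coeff · 0) h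
    exact hqbar (by simpa [hy₀] using h)
  have hsupp : Function.support H ⊆ E.tfi 0 0 := fun x hx =>
    ⟨x, (E.mem_singFiber_of_PhiSing_ne_zero hx).1, by simp⟩
  set s := ((q - C y₀).map E.res).roots.toFinset.filter
    fun u => (derivative (q.map E.res)).eval u = 0
  have hH (z : E.O) (hz : H (0 + E.t ^ (0 : ℤ) * z) ≠ 0) : E.res z ∈ s := by
    obtain ⟨-, hfib, hder⟩ := E.mem_singFiber_of_PhiSing_ne_zero hz
    have hD : E.defect q R y₀ (((0 : E.O) : E.Fc) + E.t ^ ((0 : ℕ) : ℤ) * z) ∈ E.O := by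
      simpa using E.defect_mem_iff.2 hfib
    simp only [zero_add, zpow_zero, one_mul, resF_coe] at hder
    rw [Finset.mem_filter, Multiset.mem_toFinset, mem_roots']
    exact ⟨⟨hP₀, E.eval_res_eq_zero_of_defect_mem hP (by omega) hD⟩, hder⟩
  rw [← Set.indicator_eq_self.2 hsupp, E.indicator_tfi_eq_sum H 0 0 s hH]
  refine Submodule.sum_mem _ fun u hu => ?_
  obtain ⟨hroot, hder⟩ := Finset.mem_filter.1 hu
  obtain ⟨e', Q', -, hP', hQ'⟩ :=
    E.exists_comp_succ_eq_C_mul hP hP₀ (mem_roots'.1 (Multiset.mem_toFinset.1 hroot)).2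
  have hclass : E.tfi (0 + E.t ^ (0 : ℤ) * E.rep u) (0 + 1) =
      E.tfi ((0 + E.tO ^ 0 * E.rep u : E.O) : E.Fc) ((0 + 1 : ℕ) : ℤ) := by
    simp
  rw [hclass, Set.indicator_congr (g := fun x => E.Phi f R q x (E.t ^ R * y₀)) ?_]
  · exact E.indicator_Phi_mem_LF μ hI hf (-R).toNat le_rfl hP' hQ' (by omega)
  · intro x hx
    have hO := E.mem_O_of_mem_tfi (SetLike.coe_mem _) (by norm_num) hx
    have hres : E.resF x = u := by simp [E.resF_of_mem_tfi (by norm_num) hx]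
    simp only [H, PhiSing, if_pos (And.intro hO (hres ▸ hder))]

lemma integral_PhiSing_t_zpow_mul (hI : E.IsIntegralF μ I) (hf : IsSB f) {y₀ : E.Fc} {N : ℕ}
    {a : Fin N → E.O} {c : Fin N → ℤ} {ψ : Fin N → K[X]} (hc : ∀ j, 1 ≤ c j)
    (hunion : E.singFiber q R y₀ = ⋃ j, E.tfi (a j) (c j))
    (hdisj : ∀ j k, j ≠ k → Disjoint (E.tfi (a j) (c j)) (E.tfi (a k) (c k)))
    (happrox : ∀ j, ∀ x ∈ E.O,
      E.resF ((Polynomial.eval ((a j : E.Fc) + E.t ^ (c j) * x) (q.map E.O.subtype) - y₀) *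
        E.t ^ R) = Polynomial.eval (E.resF x) (ψ j)) :
    I (fun x => E.PhiSing f R q x (E.t ^ R * y₀)) =
      ∑ j ∈ Finset.univ.filter (fun j => ¬ (ψ j).degree ≤ 0),
        algebraMap ℂ CX (∫ u, f (E.res (a j), -Polynomial.eval u (ψ j)) ∂μ) *
          RatFunc.X ^ (c j) := by
  set H := fun x => E.PhiSing f R q x (E.t ^ R * y₀)
  have hsplit : H = ∑ j, (E.tfi (a j) (c j)).indicator H := by
    have hdisj' : ((Finset.univ : Finset (Fin N)) : Set (Fin N)).PairwiseDisjoint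
        fun j => E.tfi (a j) (c j) := fun j _ k _ hjk => hdisj j k hjk
    have hsupp : Function.support H ⊆ ⋃ j ∈ Finset.univ, E.tfi (a j) (c j) := fun x hx => by
      simpa [hunion] using E.mem_singFiber_of_PhiSing_ne_zero hx
    funext x
    rw [Finset.sum_apply, ← Finset.indicator_biUnion_apply _ _ hdisj',
      Set.indicator_eq_self.2 hsupp]
  rw [hsplit, map_sum, Finset.sum_filter]
  refine Finset.sum_congr rfl fun j _ => ?_
  refine ((E.mem_LF_and_integral_of_eq_on_tfi μ hI hf (ψ j)
    (fun x hx => Set.indicator_of_notMem hx _) fun z => ?_).2.trans (ite_not _ _ _).symm)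
  have hmem := E.add_mem_tfi (a j) (c j) z.2
  have hfib : (a j : E.Fc) + E.t ^ (c j) * z ∈ E.singFiber q R y₀ :=
    hunion ▸ Set.mem_iUnion.2 ⟨j, hmem⟩
  rw [Set.indicator_of_mem hmem]
  dsimp only [H]
  rw [PhiSing_t_zpow_mul, if_pos hfib, E.resF_of_mem_tfi (hc j) hmem,
    defect, happrox j z z.2, resF_coe]

end CDVF

end Haar

/-- Every section x ↦ Φ_sing(x,y) is integrable on F.  If
y ∉ t^R O_F, or if y = t^R y₀ with S_y = {x ∈ O_F : q(x) ∈ y₀ + t^{−R}O_F, q̄′(x̄) = 0}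
empty, then ∫^F Φ_sing(x,y) dx = 0.  Otherwise, if S_y is decomposed as a disjoint union
of translated fractional ideals aⱼ + t^{cⱼ}O_F with residue field approximations ψⱼ,
then ∫^F Φ_sing(x,y) dx = Σ′ⱼ ∫_K f(āⱼ, −ψⱼ(u)) du · X^{cⱼ}, the sum being over the j
with ψⱼ non-constant. -/
theorem statement15 {K : Type} [NontriviallyNormedField K] [MeasurableSpace K] [BorelSpace K]
    [LocallyCompactSpace K] (μ : Measure K) [Measure.IsAddHaarMeasure μ]
    (E : CDVF K) (I : (E.Fc → CX) →ₗ[CX] CX) (hI : E.IsIntegralF μ I)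
    (R : ℤ) (hR : R < 0) (q : Polynomial E.O) (hq0 : q.coeff 0 = 0)
    (hqbar : q.map E.res ≠ 0) (f : K × K → ℂ) (hf : IsSB f) :
    (∀ y : E.Fc, (fun x => E.PhiSing f R q x y) ∈ E.LF μ) ∧
    (∀ y : E.Fc, (¬ ∃ z ∈ E.O, y = E.t ^ R * z) → I (fun x => E.PhiSing f R q x y) = 0) ∧
    (∀ y₀ ∈ E.O,
      ({x : E.Fc | x ∈ E.O ∧
          (∃ z ∈ E.O, Polynomial.eval x (q.map E.O.subtype) = y₀ + E.t ^ (-R) * z) ∧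
          Polynomial.eval (E.resF x) (Polynomial.derivative (q.map E.res)) = 0} = ∅ →
        I (fun x => E.PhiSing f R q x (E.t ^ R * y₀)) = 0) ∧
      ∀ (N : ℕ) (a : Fin N → E.O) (c : Fin N → ℤ) (ψ : Fin N → Polynomial K),
        (∀ j, 1 ≤ c j) →
        ({x : E.Fc | x ∈ E.O ∧
            (∃ z ∈ E.O, Polynomial.eval x (q.map E.O.subtype) = y₀ + E.t ^ (-R) * z) ∧
            Polynomial.eval (E.resF x) (Polynomial.derivative (q.map E.res)) = 0}
          = ⋃ j, E.tfi ((a j : E.Fc)) (c j)) →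
        (∀ j k, j ≠ k → Disjoint (E.tfi ((a j : E.Fc)) (c j)) (E.tfi ((a k : E.Fc)) (c k))) →
        (∀ j, ∀ x ∈ E.O,
          E.resF ((Polynomial.eval ((a j : E.Fc) + E.t ^ (c j) * x) (q.map E.O.subtype)
              - y₀) * E.t ^ R)
            = Polynomial.eval (E.resF x) (ψ j)) →
        I (fun x => E.PhiSing f R q x (E.t ^ R * y₀)) =
          ∑ j ∈ Finset.univ.filter (fun j => ¬ (ψ j).degree ≤ 0),
            algebraMap ℂ CX (∫ u, f (E.res (a j), -Polynomial.eval u (ψ j)) ∂μ) *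
              RatFunc.X ^ (c j)) := by
  have hzero_of_notMem {y : E.Fc} (hy : ¬ ∃ z ∈ E.O, y = E.t ^ R * z) :
      (fun x => E.PhiSing f R q x y) = 0 :=
    funext fun _ => E.PhiSing_eq_zero_of_notMem_t_zpow_mul f hR q hy
  refine ⟨fun y => ?_, fun y hy => by rw [hzero_of_notMem hy, map_zero],
    fun y₀ hy₀ => ⟨fun hS => ?_, fun N a c ψ hc hunion hdisj happrox => ?_⟩⟩
  · by_cases hy : ∃ z ∈ E.O, y = E.t ^ R * z
    · obtain ⟨z, hz, rfl⟩ := hy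
      exact E.PhiSing_t_zpow_mul_mem_LF μ hI hf hR hq0 hqbar ⟨z, hz⟩
    · exact hzero_of_notMem hy ▸ (E.LF μ).zero_mem
  · have hzero : (fun x => E.PhiSing f R q x (E.t ^ R * y₀)) = 0 := funext fun x =>
      by_contra fun h => (hS ▸ E.mem_singFiber_of_PhiSing_ne_zero h : x ∈ (∅ : Set E.Fc))
    rw [hzero, map_zero]
  · exact E.integral_PhiSing_t_zpow_mul μ hI hf hc hunion hdisj happrox
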